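/- If (Ũ₁^{t₁⁰,y₁⁰,y₂⁰,δ}, Ũ₂^{x₂⁰,y₂⁰,δ}) is an admissible pair of type 2 at scale δ, then for all z₁ ∈ Ũ₁^{t₁⁰,y₁⁰,y₂⁰,δ} and z₂ ∈ Ũ₂^{x₂⁰,y₂⁰,δ} one has |τ_{z₁}(z₁,z₂)| ∼_{1000} C₀² ε ρ² (1 ∨ δ) and |τ_{z₂}(z₁,z₂)| ∼_8 C₀² ε ρ² δ. -/

import Mathlib

open Set MeasureTheory ENNReal Pointwise

noncomputable section

/-- `h` is a perturbation function of cubic type on `[-1,1]`,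
with constants `C₃ > 0` and `Cl l` for `l ≥ 4`. -/
def CubicType (C₃ : ℝ) (Cl : ℕ → ℝ) (h : ℝ → ℝ) : Prop :=
  ContDiff ℝ (⊤ : ℕ∞) h ∧ h 0 = 0 ∧ deriv h 0 = 0 ∧ deriv (deriv h) 0 = 0 ∧
  (∀ y ∈ Icc (-1 : ℝ) 1,
      C₃ / 4 ≤ |deriv (deriv (deriv h)) y| ∧ |deriv (deriv (deriv h)) y| ≤ C₃) ∧
  (∀ l : ℕ, 4 ≤ l → ∀ y ∈ Icc (-1 : ℝ) 1, |iteratedDeriv l h y| ≤ Cl l)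

/-- The transversality quantity `τ_z(z₁,z₂)` for the phase `φ(x,y) = xy + ε h(y)`. -/
def tau (ε : ℝ) (h : ℝ → ℝ) (z z₁ z₂ : ℝ × ℝ) : ℝ :=
  z₂.1 - z₁.1 + ε * (deriv h z₂.2 - deriv h z₁.2
      - (1 / 2) * deriv (deriv h) z.2 * (z₂.2 - z₁.2))

/-- A (positive) dyadic number. -/
def IsDyadic (x : ℝ) : Prop := ∃ k : ℤ, x = 2 ^ k

/-- The set `Ũ₁^{t₁⁰, y₁⁰, y₂⁰, δ}` (type 2). -/
def U1tset (h : ℝ → ℝ) (ε ρ δ t₁0 y₁0 y₂0 : ℝ) : Set (ℝ × ℝ) :=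
  {z | 0 ≤ z.2 - y₁0 ∧ z.2 - y₁0 < ρ ∧
    0 ≤ z.1 - t₁0 + ε * (deriv h z.2 - deriv h y₂0 - deriv (deriv h) y₂0 / 2 * (z.2 - y₂0)) ∧
    z.1 - t₁0 + ε * (deriv h z.2 - deriv h y₂0 - deriv (deriv h) y₂0 / 2 * (z.2 - y₂0))
      < ε * ρ ^ 2 * δ}

/-- The set `Ũ₂^{x₂⁰, y₂⁰, δ}` (type 2). -/
def U2tset (h : ℝ → ℝ) (ε ρ δ x₂0 y₂0 : ℝ) : Set (ℝ × ℝ) :=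
  {z | 0 ≤ z.2 - y₂0 ∧ z.2 - y₂0 < ρ * min 1 δ ∧
    0 ≤ z.1 - x₂0 + ε * (deriv (deriv h) y₂0 / 2) * (z.2 - y₂0) ∧
    z.1 - x₂0 + ε * (deriv (deriv h) y₂0 / 2) * (z.2 - y₂0) < ε * ρ ^ 2 * δ}

/-- The base point abscissa `x₁⁰` determined by `t₁⁰, y₁⁰, y₂⁰` (type 2). -/
def x10 (h : ℝ → ℝ) (ε t₁0 y₁0 y₂0 : ℝ) : ℝ :=
  t₁0 - ε * (deriv h y₁0 - deriv h y₂0 - deriv (deriv h) y₂0 / 2 * (y₁0 - y₂0))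

/-- `(Ũ₁^{t₁⁰,y₁⁰,y₂⁰,δ}, Ũ₂^{x₂⁰,y₂⁰,δ})` is an admissible pair of type 2 at scales
`δ, ρ`, contained in `V_{j₁,ρ} × V_{j₂,ρ}` (so `y₁⁰ = j₁ ρ`). -/
def Adm2 (h : ℝ → ℝ) (ε ρ δ C₀ : ℝ) (j₁ j₂ : ℤ) (t₁0 y₂0 x₂0 : ℝ) : Prop :=
  (∃ n : ℤ, t₁0 = -1 + (n : ℝ) * (ε * ρ ^ 2 * δ)) ∧ t₁0 ∈ Ico (-1 : ℝ) 1 ∧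
  (∃ n : ℤ, x₂0 = -1 + (n : ℝ) * (ε * ρ ^ 2 * δ)) ∧ x₂0 ∈ Ico (-1 : ℝ) 1 ∧
  (∃ n : ℤ, y₂0 = (j₂ : ℝ) * ρ + (n : ℝ) * (ρ * min 1 δ)) ∧
  (j₂ : ℝ) * ρ ≤ y₂0 ∧ y₂0 + ρ * min 1 δ ≤ (j₂ : ℝ) * ρ + ρ ∧
  C₀ ^ 2 / 4 * (ε * ρ ^ 2 * δ) ≤ |t₁0 - x₂0| ∧
  |t₁0 - x₂0| < 4 * C₀ ^ 2 * (ε * ρ ^ 2 * δ) ∧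
  C₀ ^ 2 / 512 * (ε * ρ ^ 2 * max 1 δ) ≤
      |tau ε h (x10 h ε t₁0 ((j₁ : ℝ) * ρ) y₂0, (j₁ : ℝ) * ρ)
        (x10 h ε t₁0 ((j₁ : ℝ) * ρ) y₂0, (j₁ : ℝ) * ρ) (x₂0, y₂0)| ∧
  |tau ε h (x10 h ε t₁0 ((j₁ : ℝ) * ρ) y₂0, (j₁ : ℝ) * ρ)
        (x10 h ε t₁0 ((j₁ : ℝ) * ρ) y₂0, (j₁ : ℝ) * ρ) (x₂0, y₂0)|
      < 5 * C₀ ^ 2 * (ε * ρ ^ 2 * max 1 δ)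

/-!
Writing `τ_z(z₁,z₂) = F_z(z₂) - F_z(z₁)` with `F_z(w) = w.1 + ε (h'(w.2) - h''(z.2) w.2 / 2)`,
a change of the centre `z` costs `(ε/2) (h''(w.2) - h''(z.2)) (z₂.2 - z₁.2)`. With the centre
frozen at `z₂⁰`, the coordinates cutting out `Ũ₁` and `Ũ₂` are increments of `τ_{z₂⁰}`, so
`τ_{z₂⁰}(z₁,z₂)` is within `(1 + C₃) ε ρ² δ` of `τ_{z₂⁰}(z₁⁰,z₂⁰) = x₂⁰ - t₁⁰` (Taylor for `h'`
on an interval of length `ρ (1 ∧ δ)`). Moving the centre to `z₂`, resp. to `z₁` and comparing with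
`τ_{z₁⁰}(z₁⁰,z₂⁰)`, costs `O(C₃ C₀ ε ρ² (1 ∨ δ))` because `|y₂ - y₁| ≤ C₀ ρ`. All errors are thus
`≤ (1 + C₃)(1 + C₀) ε ρ² (1 ∨ δ)`, negligible against the admissibility bounds once
`C₀ ≥ 4096 (1 + C₃)`.
-/

theorem Convex.abs_sub_le_of_abs_deriv_le {f : ℝ → ℝ} {s : Set ℝ} {C a b : ℝ}
    (hs : Convex ℝ s) (hf : ∀ x ∈ s, DifferentiableAt ℝ f x) (hC : ∀ x ∈ s, |deriv f x| ≤ C)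
    (ha : a ∈ s) (hb : b ∈ s) : |f b - f a| ≤ C * |b - a| := by
  simpa only [Real.norm_eq_abs] using
    hs.norm_image_sub_le_of_norm_deriv_le hf (by simpa only [Real.norm_eq_abs] using hC) ha hb

theorem Convex.abs_sub_sub_deriv_mul_le {f : ℝ → ℝ} {s : Set ℝ} {C a b : ℝ}
    (hs : Convex ℝ s) (hf : ∀ x ∈ s, DifferentiableAt ℝ f x)
    (hf' : ∀ x ∈ s, DifferentiableAt ℝ (deriv f) x) (hC : ∀ x ∈ s, |deriv (deriv f) x| ≤ C)
    (ha : a ∈ s) (hb : b ∈ s) : |f b - f a - deriv f a * (b - a)| ≤ C * (b - a) ^ 2 := by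
  have hsub : uIcc a b ⊆ s := hs.ordConnected.uIcc_subset ha hb
  have hC₀ : 0 ≤ C := (abs_nonneg _).trans (hC a ha)
  have hderiv : ∀ x ∈ s, HasDerivAt (fun y ↦ f y - deriv f a * y) (deriv f x - deriv f a) x :=
    fun x hx ↦ (hf x hx).hasDerivAt.sub (by simpa using (hasDerivAt_id x).const_mul (deriv f a))
  have key := (convex_uIcc a b).abs_sub_le_of_abs_deriv_le (C := C * |b - a|)
    (fun x hx ↦ (hderiv x (hsub hx)).differentiableAt)
    (fun x hx ↦ by
      rw [(hderiv x (hsub hx)).deriv]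
      calc |deriv f x - deriv f a| ≤ C * |x - a| :=
            hs.abs_sub_le_of_abs_deriv_le hf' hC ha (hsub hx)
        _ ≤ C * |b - a| := mul_le_mul_of_nonneg_left (abs_sub_left_of_mem_uIcc hx) hC₀)
    left_mem_uIcc right_mem_uIcc
  calc |f b - f a - deriv f a * (b - a)|
      = |f b - deriv f a * b - (f a - deriv f a * a)| := by congr 1; ring
    _ ≤ C * |b - a| * |b - a| := key
    _ = C * (b - a) ^ 2 := by rw [mul_assoc, ← abs_mul, abs_mul_self, sq]

namespace CubicType

variable {C₃ : ℝ} {Cl : ℕ → ℝ} {h : ℝ → ℝ}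

theorem nonneg (hh : CubicType C₃ Cl h) : 0 ≤ C₃ :=
  (abs_nonneg _).trans (hh.2.2.2.2.1 0 ⟨by norm_num, by norm_num⟩).2

theorem differentiable_iterate_deriv (hh : CubicType C₃ Cl h) (n : ℕ) :
    Differentiable ℝ (deriv^[n] h) :=
  (hh.1.iterate_deriv n).differentiable (by simp)

theorem abs_deriv_deriv_sub_le (hh : CubicType C₃ Cl h) {a b : ℝ}
    (ha : a ∈ Icc (-1 : ℝ) 1) (hb : b ∈ Icc (-1 : ℝ) 1) :
    |deriv (deriv h) b - deriv (deriv h) a| ≤ C₃ * |b - a| :=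
  (convex_Icc (-1) 1).abs_sub_le_of_abs_deriv_le
    (fun x _ ↦ hh.differentiable_iterate_deriv 2 x) (fun y hy ↦ (hh.2.2.2.2.1 y hy).2) ha hb

theorem abs_deriv_sub_sub_le (hh : CubicType C₃ Cl h) {a b : ℝ}
    (ha : a ∈ Icc (-1 : ℝ) 1) (hb : b ∈ Icc (-1 : ℝ) 1) :
    |deriv h b - deriv h a - deriv (deriv h) a * (b - a)| ≤ C₃ * (b - a) ^ 2 :=
  (convex_Icc (-1) 1).abs_sub_sub_deriv_mul_le (fun x _ ↦ hh.differentiable_iterate_deriv 1 x)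
    (fun x _ ↦ hh.differentiable_iterate_deriv 2 x) (fun y hy ↦ (hh.2.2.2.2.1 y hy).2) ha hb

end CubicType

/-- The paper's strip `I_{j,ρ}`. -/
def strip (ρ : ℝ) (j : ℤ) : Set ℝ := Ico (j * ρ) (j * ρ + ρ)

theorem strip_subset_Icc {ρ : ℝ} {j : ℤ} (h₁ : -1 ≤ j * ρ) (h₂ : j * ρ + ρ ≤ 1) :
    strip ρ j ⊆ Icc (-1 : ℝ) 1 :=
  fun _ hy ↦ ⟨h₁.trans hy.1, hy.2.le.trans h₂⟩

theorem abs_sub_le_of_mem_strip {ρ C₀ y y' : ℝ} {j j' : ℤ} (hC₀ : 2 ≤ C₀)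
    (hj : |(j' : ℝ) - j| < C₀ / 2) (hy : y ∈ strip ρ j) (hy' : y' ∈ strip ρ j') :
    |y' - y| ≤ C₀ * ρ := by
  obtain ⟨hj₁, hj₂⟩ := abs_lt.1 hj
  obtain ⟨⟨hy₁, hy₂⟩, ⟨hy₁', hy₂'⟩⟩ := And.intro hy hy'
  rw [abs_le]
  constructor <;> nlinarith

theorem snd_mem_strip_of_mem_U1tset {h : ℝ → ℝ} {ε ρ δ t₁0 y₂0 : ℝ} {j : ℤ} {z : ℝ × ℝ}
    (hz : z ∈ U1tset h ε ρ δ t₁0 (j * ρ) y₂0) : z.2 ∈ strip ρ j :=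
  ⟨by linarith [hz.1], by linarith [hz.2.1]⟩

theorem snd_mem_strip_of_mem_U2tset {h : ℝ → ℝ} {ε ρ δ x₂0 y₂0 : ℝ} {j : ℤ} {z : ℝ × ℝ}
    (hz : z ∈ U2tset h ε ρ δ x₂0 y₂0) (h₁ : j * ρ ≤ y₂0) (h₂ : y₂0 + ρ * min 1 δ ≤ j * ρ + ρ) :
    z.2 ∈ strip ρ j :=
  ⟨by linarith [hz.1], by linarith [hz.2.1]⟩

theorem abs_half_mul_mul_le {ε a b A B : ℝ} (hε : 0 ≤ ε) (ha : |a| ≤ A) (hb : |b| ≤ B) :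
    |ε / 2 * a * b| ≤ ε / 2 * A * B := by
  have hε₂ : 0 ≤ ε / 2 := by positivity
  rw [abs_mul, abs_mul, abs_of_nonneg hε₂]
  exact mul_le_mul (mul_le_mul_of_nonneg_left ha hε₂) hb (abs_nonneg _)
    (mul_nonneg hε₂ ((abs_nonneg _).trans ha))

section tau

variable {C₃ ε ρ δ C₀ t₁0 y₁0 x₂0 y₂0 : ℝ} {Cl : ℕ → ℝ} {h : ℝ → ℝ} {z₁ z₂ : ℝ × ℝ}

theorem tau_sub_tau (z w z₁ z₂ : ℝ × ℝ) :
    tau ε h z z₁ z₂ - tau ε h w z₁ z₂ =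
      ε / 2 * (deriv (deriv h) w.2 - deriv (deriv h) z.2) * (z₂.2 - z₁.2) := by
  simp only [tau]
  ring

theorem tau_x10_eq_sub : tau ε h (x₂0, y₂0) (x10 h ε t₁0 y₁0 y₂0, y₁0) (x₂0, y₂0) = x₂0 - t₁0 := by
  simp only [tau, x10]
  ring

theorem abs_tau_base_sub_le (hh : CubicType C₃ Cl h) (hε : 0 ≤ ε) (hδ : 0 ≤ δ)
    (hz₁ : z₁ ∈ U1tset h ε ρ δ t₁0 y₁0 y₂0) (hz₂ : z₂ ∈ U2tset h ε ρ δ x₂0 y₂0)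
    (hy₂0 : y₂0 ∈ Icc (-1 : ℝ) 1) (hy₂ : z₂.2 ∈ Icc (-1 : ℝ) 1) :
    |tau ε h (x₂0, y₂0) z₁ z₂ - (x₂0 - t₁0)| ≤ (1 + C₃) * (ε * ρ ^ 2 * δ) := by
  obtain ⟨-, -, h₁, h₁'⟩ := hz₁
  obtain ⟨hy, hy', h₂, h₂'⟩ := hz₂
  have hR := hh.abs_deriv_sub_sub_le hy₂0 hy₂
  have hsq : (z₂.2 - y₂0) ^ 2 ≤ ρ ^ 2 * δ :=
    calc (z₂.2 - y₂0) ^ 2 ≤ (ρ * min 1 δ) ^ 2 := pow_le_pow_left₀ hy hy'.le 2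
      _ = ρ ^ 2 * (min 1 δ * min 1 δ) := by ring
      _ ≤ ρ ^ 2 * δ := by
        gcongr
        nlinarith [min_le_left 1 δ, min_le_right 1 δ, le_min zero_le_one hδ]
  set u₁ := z₁.1 - t₁0 + ε * (deriv h z₁.2 - deriv h y₂0
    - deriv (deriv h) y₂0 / 2 * (z₁.2 - y₂0))
  set u₂ := z₂.1 - x₂0 + ε * (deriv (deriv h) y₂0 / 2) * (z₂.2 - y₂0)
  set R := deriv h z₂.2 - deriv h y₂0 - deriv (deriv h) y₂0 * (z₂.2 - y₂0)
  have hsplit : tau ε h (x₂0, y₂0) z₁ z₂ - (x₂0 - t₁0) = u₂ - u₁ + ε * R := by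
    simp only [tau, u₁, u₂, R]
    ring
  have hoff : |u₂ - u₁| ≤ ε * ρ ^ 2 * δ := abs_sub_le_iff.2 ⟨by linarith, by linarith⟩
  calc |tau ε h (x₂0, y₂0) z₁ z₂ - (x₂0 - t₁0)| ≤ |u₂ - u₁| + ε * |R| := by
        rw [hsplit]
        exact (abs_add_le _ _).trans_eq (by rw [abs_mul, abs_of_nonneg hε])
    _ ≤ ε * ρ ^ 2 * δ + ε * (C₃ * (ρ ^ 2 * δ)) := by
        gcongr
        exact hR.trans (mul_le_mul_of_nonneg_left hsq hh.nonneg)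
    _ = (1 + C₃) * (ε * ρ ^ 2 * δ) := by ring

theorem abs_tau_right_sub_le (hh : CubicType C₃ Cl h) (hε : 0 ≤ ε) (hρ : 0 ≤ ρ) (hδ : 0 ≤ δ)
    (hC₀ : 0 ≤ C₀) (hz₁ : z₁ ∈ U1tset h ε ρ δ t₁0 y₁0 y₂0) (hz₂ : z₂ ∈ U2tset h ε ρ δ x₂0 y₂0)
    (hy₂0 : y₂0 ∈ Icc (-1 : ℝ) 1) (hy₂ : z₂.2 ∈ Icc (-1 : ℝ) 1)
    (hy₁₂ : |z₂.2 - z₁.2| ≤ C₀ * ρ) :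
    |tau ε h z₂ z₁ z₂ - (x₂0 - t₁0)| ≤ (1 + C₃) * (1 + C₀) * (ε * ρ ^ 2 * δ) := by
  have hbase := abs_tau_base_sub_le hh hε hδ hz₁ hz₂ hy₂0 hy₂
  have hy : |y₂0 - z₂.2| ≤ ρ * δ := by
    rw [abs_sub_comm, abs_of_nonneg hz₂.1]
    exact hz₂.2.1.le.trans (mul_le_mul_of_nonneg_left (min_le_right 1 δ) hρ)
  have hcentre : |tau ε h z₂ z₁ z₂ - tau ε h (x₂0, y₂0) z₁ z₂|
      ≤ ε / 2 * (C₃ * (ρ * δ)) * (C₀ * ρ) := by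
    rw [tau_sub_tau]
    exact abs_half_mul_mul_le hε
      ((hh.abs_deriv_deriv_sub_le hy₂ hy₂0).trans (mul_le_mul_of_nonneg_left hy hh.nonneg)) hy₁₂
  have hslack : 0 ≤ C₀ * (1 + C₃ / 2) * (ε * ρ ^ 2 * δ) := by
    have hC₃ := hh.nonneg
    positivity
  calc |tau ε h z₂ z₁ z₂ - (x₂0 - t₁0)|
      ≤ |tau ε h z₂ z₁ z₂ - tau ε h (x₂0, y₂0) z₁ z₂|
          + |tau ε h (x₂0, y₂0) z₁ z₂ - (x₂0 - t₁0)| := abs_sub_le _ _ _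
    _ ≤ (1 + C₃) * (1 + C₀) * (ε * ρ ^ 2 * δ) := by linarith

theorem abs_tau_left_sub_le (hh : CubicType C₃ Cl h) (hε : 0 ≤ ε) (hρ : 0 ≤ ρ) (hδ : 0 ≤ δ)
    (hC₀ : 0 ≤ C₀) (hz₁ : z₁ ∈ U1tset h ε ρ δ t₁0 y₁0 y₂0) (hz₂ : z₂ ∈ U2tset h ε ρ δ x₂0 y₂0)
    (hy₁0 : y₁0 ∈ Icc (-1 : ℝ) 1) (hy₂0 : y₂0 ∈ Icc (-1 : ℝ) 1)
    (hy₁ : z₁.2 ∈ Icc (-1 : ℝ) 1) (hy₂ : z₂.2 ∈ Icc (-1 : ℝ) 1)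
    (hy0 : |y₂0 - y₁0| ≤ C₀ * ρ) (hy₁₂ : |z₂.2 - z₁.2| ≤ C₀ * ρ) :
    |tau ε h z₁ z₁ z₂ - tau ε h (x10 h ε t₁0 y₁0 y₂0, y₁0) (x10 h ε t₁0 y₁0 y₂0, y₁0) (x₂0, y₂0)|
      ≤ (1 + C₃) * (1 + C₀) * (ε * ρ ^ 2 * max 1 δ) := by
  set z₁0 : ℝ × ℝ := (x10 h ε t₁0 y₁0 y₂0, y₁0)
  set z₂0 : ℝ × ℝ := (x₂0, y₂0)
  have hbase := abs_tau_base_sub_le hh hε hδ hz₁ hz₂ hy₂0 hy₂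
  have hy : |y₁0 - z₁.2| ≤ ρ := by
    rw [abs_sub_comm, abs_of_nonneg hz₁.1]
    exact hz₁.2.1.le
  have hcentre : |tau ε h z₁ z₁ z₂ - tau ε h z₁0 z₁ z₂| ≤ ε / 2 * (C₃ * ρ) * (C₀ * ρ) := by
    rw [tau_sub_tau]
    exact abs_half_mul_mul_le hε
      ((hh.abs_deriv_deriv_sub_le hy₁ hy₁0).trans (mul_le_mul_of_nonneg_left hy hh.nonneg)) hy₁₂
  have hmove : |(z₂.2 - z₁.2) - (y₂0 - y₁0)| ≤ ρ := by
    obtain ⟨h₁, h₁', -⟩ := hz₁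
    obtain ⟨h₂, h₂', -⟩ := hz₂
    have := mul_le_mul_of_nonneg_left (min_le_left 1 δ) hρ
    rw [abs_le]
    constructor <;> linarith
  -- Each shift of the centre from `z₂⁰` to `z₁⁰` alone is of size `ε C₃ (C₀ ρ)²`, far too large;
  -- only the difference of the two shifts enters.
  have hshift : |(tau ε h z₁0 z₁ z₂ - tau ε h z₂0 z₁ z₂)
      - (tau ε h z₁0 z₁0 z₂0 - tau ε h z₂0 z₁0 z₂0)| ≤ ε / 2 * (C₃ * (C₀ * ρ)) * ρ := by
    rw [tau_sub_tau, tau_sub_tau, ← mul_sub]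
    exact abs_half_mul_mul_le hε
      ((hh.abs_deriv_deriv_sub_le hy₁0 hy₂0).trans (mul_le_mul_of_nonneg_left hy0 hh.nonneg))
      hmove
  have hsplit : tau ε h z₁ z₁ z₂ - tau ε h z₁0 z₁0 z₂0 =
      (tau ε h z₁ z₁ z₂ - tau ε h z₁0 z₁ z₂)
        + ((tau ε h z₁0 z₁ z₂ - tau ε h z₂0 z₁ z₂) - (tau ε h z₁0 z₁0 z₂0 - tau ε h z₂0 z₁0 z₂0))
        + (tau ε h z₂0 z₁ z₂ - (x₂0 - t₁0)) := by
    rw [tau_x10_eq_sub]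
    ring
  have hC₃ := hh.nonneg
  have hερ : 0 ≤ ε * ρ ^ 2 := by positivity
  have hδM : (1 + C₃) * (ε * ρ ^ 2 * δ) ≤ (1 + C₃) * (ε * ρ ^ 2 * max 1 δ) := by
    gcongr
    exact le_max_right 1 δ
  have hC₃M : C₃ * C₀ * (ε * ρ ^ 2) ≤ (1 + C₃) * C₀ * (ε * ρ ^ 2 * max 1 δ) := by
    exact mul_le_mul (mul_le_mul_of_nonneg_right (by linarith) hC₀)
      (le_mul_of_one_le_right hερ (le_max_left 1 δ)) hερ (by positivity)
  rw [hsplit]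
  refine (abs_add_le _ _).trans ((add_le_add ((abs_add_le _ _).trans
    (add_le_add hcentre hshift)) hbase).trans ?_)
  linarith

end tau

theorem abs_mem_Icc_of_abs_sub_le {a b L U η : ℝ} (hab : |a - b| ≤ η) (hL : L ≤ |b|)
    (hU : |b| ≤ U) : |a| ∈ Icc (L - η) (U + η) :=
  ⟨by linarith [abs_sub_abs_le_abs_sub b a, abs_sub_comm a b],
    by linarith [abs_sub_abs_le_abs_sub a b]⟩

theorem one_add_mul_one_add_le_sq_div {C₃ C₀ : ℝ} (hC₃ : 0 ≤ C₃) (hC₀ : 4096 * (1 + C₃) ≤ C₀) :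
    (1 + C₃) * (1 + C₀) ≤ C₀ ^ 2 / 2048 := by
  nlinarith

/-- Lemma 3.4 (Lemma `sizeofdeltas2`): on an admissible pair of type 2 at scale `δ`,
`|τ_{z₁}(z₁,z₂)| ∼₁₀₀₀ C₀² ε ρ² (1 ∨ δ)` and `|τ_{z₂}(z₁,z₂)| ∼₈ C₀² ε ρ² δ`. -/
theorem sizeofdeltas_type2 (C₃ : ℝ) (hC₃ : 0 < C₃) (Cl : ℕ → ℝ) :
    ∃ C₀₀ : ℝ, 1 ≤ C₀₀ ∧
    ∀ h : ℝ → ℝ, CubicType C₃ Cl h →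
    ∀ ε ρ δ C₀ : ℝ, 0 < ε → ε ≤ 1 → 0 < ρ → ρ ≤ 1 → 0 < δ → ε * ρ ^ 2 * δ ≤ 1 →
      IsDyadic ρ → IsDyadic δ → IsDyadic C₀ → C₀₀ ≤ C₀ →
    ∀ j₁ j₂ : ℤ, C₀ / 8 < |(j₂ : ℝ) - (j₁ : ℝ)| → |(j₂ : ℝ) - (j₁ : ℝ)| < C₀ / 2 →
      -1 ≤ (j₁ : ℝ) * ρ → (j₁ : ℝ) * ρ + ρ ≤ 1 → -1 ≤ (j₂ : ℝ) * ρ → (j₂ : ℝ) * ρ + ρ ≤ 1 →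
    ∀ t₁0 y₂0 x₂0 : ℝ, Adm2 h ε ρ δ C₀ j₁ j₂ t₁0 y₂0 x₂0 →
    ∀ z₁ ∈ U1tset h ε ρ δ t₁0 ((j₁ : ℝ) * ρ) y₂0, ∀ z₂ ∈ U2tset h ε ρ δ x₂0 y₂0,
      C₀ ^ 2 * ε * ρ ^ 2 * max 1 δ / 1000 ≤ |tau ε h z₁ z₁ z₂| ∧
      |tau ε h z₁ z₁ z₂| ≤ 1000 * (C₀ ^ 2 * ε * ρ ^ 2 * max 1 δ) ∧
      C₀ ^ 2 * ε * ρ ^ 2 * δ / 8 ≤ |tau ε h z₂ z₁ z₂| ∧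
      |tau ε h z₂ z₁ z₂| ≤ 8 * (C₀ ^ 2 * ε * ρ ^ 2 * δ) := by
  refine ⟨4096 * (1 + C₃), by linarith, ?_⟩
  intro h hh ε ρ δ C₀ hε _ hρ _ hδ _ _ _ _ hC₀ j₁ j₂ _ hj hj₁ hj₁' hj₂ hj₂' t₁0 y₂0 x₂0 hadm
    z₁ hz₁ z₂ hz₂
  obtain ⟨-, -, -, -, -, hy₂0lo, hy₂0hi, hx_lo, hx_hi, hT_lo, hT_hi⟩ := hadm
  have hI₁ := strip_subset_Icc hj₁ hj₁'
  have hI₂ := strip_subset_Icc hj₂ hj₂'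
  have hy₁0 : (j₁ : ℝ) * ρ ∈ strip ρ j₁ := ⟨le_rfl, by linarith⟩
  have hy₂0 : y₂0 ∈ strip ρ j₂ := ⟨hy₂0lo, by nlinarith [lt_min one_pos hδ]⟩
  have hy₁ := snd_mem_strip_of_mem_U1tset hz₁
  have hy₂ := snd_mem_strip_of_mem_U2tset hz₂ hy₂0lo hy₂0hi
  have hdist {y y' : ℝ} : y ∈ strip ρ j₁ → y' ∈ strip ρ j₂ → |y' - y| ≤ C₀ * ρ :=
    abs_sub_le_of_mem_strip (by linarith) hj
  have hτ₁ := abs_tau_left_sub_le hh hε.le hρ.le hδ.le (by linarith) hz₁ hz₂ (hI₁ hy₁0)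
    (hI₂ hy₂0) (hI₁ hy₁) (hI₂ hy₂) (hdist hy₁0 hy₂0) (hdist hy₁ hy₂)
  have hτ₂ := abs_tau_right_sub_le hh hε.le hρ.le hδ.le (by linarith) hz₁ hz₂ (hI₂ hy₂0)
    (hI₂ hy₂) (hdist hy₁ hy₂)
  have hC := one_add_mul_one_add_le_sq_div hC₃.le hC₀
  obtain ⟨h₁lo, h₁hi⟩ := abs_mem_Icc_of_abs_sub_le
    (hτ₁.trans (mul_le_mul_of_nonneg_right hC (by positivity))) hT_lo hT_hi.le
  obtain ⟨h₂lo, h₂hi⟩ := abs_mem_Icc_of_abs_sub_le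
    (hτ₂.trans (mul_le_mul_of_nonneg_right hC (by positivity)))
    (hx_lo.trans_eq (abs_sub_comm _ _)) (hx_hi.le.trans_eq' (abs_sub_comm _ _))
  have hC₀pos : 0 < C₀ := by linarith
  have hM : 0 < C₀ ^ 2 * (ε * ρ ^ 2 * max 1 δ) := by positivity
  have hδ' : 0 < C₀ ^ 2 * (ε * ρ ^ 2 * δ) := by positivity
  exact ⟨by linarith, by linarith, by linarith, by linarith⟩
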